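/- arXiv:2301.04874 — 2 statements merged into one kernel-verified Lean document; each statement's English description precedes it below -/
import Mathlib

section
/- A smooth conic L_{q,m} ⊂ F (i.e. with qm ≠ 0) is j-invariant if and only if m = q̄ in ℙ². In particular, the j-invariant smooth conics are exactly the fibers of the twistor projection π(p,ℓ) = p̄ × ℓ. -/
open scoped BigOperators

noncomputable section

/-- The complex projective plane. -/
abbrev P2 := Projectivization ℂ (Fin 3 → ℂ)

/-- The bilinear incidence pairing. -/
def dotc (v w : Fin 3 → ℂ) : ℂ := ∑ i, v i * w i

/-- The flag threefold `F = {(p,ℓ) ∈ ℙ² × ℙ² : pℓ = 0}`. -/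
def FlagThreefold : Set (P2 × P2) := {x | dotc x.1.rep x.2.rep = 0}

/-- The bidegree `(1,1)` curve `L_{q,m} = {(p,ℓ) ∈ F : pm = 0, qℓ = 0}`. -/
def conicL (q m : Fin 3 → ℂ) : Set (P2 × P2) :=
  {x | x ∈ FlagThreefold ∧ dotc x.1.rep m = 0 ∧ dotc q x.2.rep = 0}

/-- The fiber of `π₁(p,ℓ) = p` over `a`, a curve of bidegree `(0,1)`. -/
def fiber1 (a : P2) : Set (P2 × P2) := {x | x ∈ FlagThreefold ∧ x.1 = a}

/-- The fiber of `π₂(p,ℓ) = ℓ` over `b`, a curve of bidegree `(1,0)`. -/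
def fiber2 (b : P2) : Set (P2 × P2) := {x | x ∈ FlagThreefold ∧ x.2 = b}

/-- Coordinatewise complex conjugation on `ℙ²`. -/
def conjP (P : P2) : P2 :=
  Projectivization.mk ℂ (fun i => starRingEnd ℂ (P.rep i))
    (fun h => P.rep_nonzero (funext fun i => by simpa using congrFun h i))

/-- The twistor involution `j(p,ℓ) = (ℓ̄, p̄)`. -/
def jmap (x : P2 × P2) : P2 × P2 := (conjP x.2, conjP x.1)

/-- The cross product of homogeneous coordinate vectors. -/
def cross3 (v w : Fin 3 → ℂ) : Fin 3 → ℂ :=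
  ![v 1 * w 2 - v 2 * w 1, v 2 * w 0 - v 0 * w 2, v 0 * w 1 - v 1 * w 0]

/-! ### Auxiliary lemmas -/

lemma dotc3 (v w : Fin 3 → ℂ) : dotc v w = v 0 * w 0 + v 1 * w 1 + v 2 * w 2 := by
  simp [dotc, Fin.sum_univ_three]

lemma conj_ne_zero {v : Fin 3 → ℂ} (hv : v ≠ 0) :
    (fun i => starRingEnd ℂ (v i)) ≠ 0 := by
  intro h
  exact hv (funext fun i => by simpa using congrFun h i)

lemma conjP_rep (P : P2) :
    ∃ a : ℂˣ, (conjP P).rep = fun i => (a : ℂ) * starRingEnd ℂ (P.rep i) := by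
  obtain ⟨a, ha⟩ := Projectivization.exists_smul_eq_mk_rep ℂ
    (fun i => starRingEnd ℂ (P.rep i))
    (fun h => P.rep_nonzero (funext fun i => by simpa using congrFun h i))
  exact ⟨a, by rw [conjP, ← ha]; funext i; simp [Units.smul_def]⟩

lemma conjP_mk (v : Fin 3 → ℂ) (hv : v ≠ 0) :
    conjP (Projectivization.mk ℂ v hv) =
      Projectivization.mk ℂ (fun i => starRingEnd ℂ (v i)) (conj_ne_zero hv) := by
  obtain ⟨a, ha⟩ := Projectivization.exists_smul_eq_mk_rep ℂ v hv
  rw [conjP, Projectivization.mk_eq_mk_iff']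
  refine ⟨starRingEnd ℂ a, funext fun i => ?_⟩
  have : (Projectivization.mk ℂ v hv).rep i = (a : ℂ) * v i := by
    rw [← ha]; simp [Units.smul_def]
  simp [this, map_mul]

lemma conjP_conjP (P : P2) : conjP (conjP P) = P := by
  obtain ⟨a, ha⟩ := conjP_rep P
  rw [show conjP (conjP P) = Projectivization.mk ℂ
      (fun i => starRingEnd ℂ ((conjP P).rep i)) _ from rfl]
  rw [← Projectivization.mk_rep P, Projectivization.mk_eq_mk_iff']
  refine ⟨starRingEnd ℂ a, funext fun i => ?_⟩
  have hrep : (Projectivization.mk ℂ P.rep P.rep_nonzero).rep = P.rep := by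
    rw [Projectivization.mk_rep]
  simp [hrep, ha, map_mul]

lemma jmap_jmap (x : P2 × P2) : jmap (jmap x) = x := by
  cases x; simp [jmap, conjP_conjP]

lemma jimage {S : Set (P2 × P2)} (h : ∀ x ∈ S, jmap x ∈ S) : jmap '' S = S := by
  apply Set.Subset.antisymm
  · rintro _ ⟨y, hy, rfl⟩; exact h y hy
  · intro x hx; exact ⟨jmap x, h x hx, jmap_jmap x⟩

lemma dotc_comm (v w : Fin 3 → ℂ) : dotc v w = dotc w v := by
  simp [dotc3]; ring

lemma dotc_cross_left (a b : Fin 3 → ℂ) : dotc a (cross3 a b) = 0 := by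
  simp [dotc3, cross3]; ring

lemma dotc_cross_right (a b : Fin 3 → ℂ) : dotc b (cross3 a b) = 0 := by
  simp [dotc3, cross3]; ring

lemma dotc_cross_right' (a b : Fin 3 → ℂ) : dotc (cross3 a b) b = 0 := by
  simp [dotc3, cross3]; ring

lemma triple_prod (a b c : Fin 3 → ℂ) :
    dotc (cross3 a b) c = dotc a (cross3 b c) := by
  simp [dotc3, cross3]; ring

lemma cross3_eq_zero {v w : Fin 3 → ℂ} (hv : v ≠ 0) (h : cross3 v w = 0) :
    ∃ t : ℂ, w = t • v := by
  have h0 := congrFun h 0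
  have h1 := congrFun h 1
  have h2 := congrFun h 2
  simp [cross3, sub_eq_zero] at h0 h1 h2
  have hv' : v 0 ≠ 0 ∨ v 1 ≠ 0 ∨ v 2 ≠ 0 := by
    by_contra hcon
    push_neg at hcon
    exact hv (funext fun i => by fin_cases i <;>
      simp [hcon.1, hcon.2.1, hcon.2.2])
  rcases hv' with hj | hj | hj
  · refine ⟨w 0 / v 0, funext fun i => ?_⟩
    rcases (by omega : i = 0 ∨ i = 1 ∨ i = 2) with rfl | rfl | rfl <;>
      simp only [Pi.smul_apply, smul_eq_mul] <;> field_simp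
    · linear_combination h2
    · linear_combination -h1
  · refine ⟨w 1 / v 1, funext fun i => ?_⟩
    rcases (by omega : i = 0 ∨ i = 1 ∨ i = 2) with rfl | rfl | rfl <;>
      simp only [Pi.smul_apply, smul_eq_mul] <;> field_simp
    · linear_combination -h2
    · linear_combination h0
  · refine ⟨w 2 / v 2, funext fun i => ?_⟩
    rcases (by omega : i = 0 ∨ i = 1 ∨ i = 2) with rfl | rfl | rfl <;>
      simp only [Pi.smul_apply, smul_eq_mul] <;> field_simp
    · linear_combination h1
    · linear_combination -h0

/-- If `q̄ = c • m` with `c ≠ 0`, then `conicL q m` is preserved by `j`. -/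
lemma mem_jmap (q m : Fin 3 → ℂ) (c : ℂ) (hc : c ≠ 0)
    (hmc : ∀ i, starRingEnd ℂ (q i) = c * m i) :
    ∀ x ∈ conicL q m, jmap x ∈ conicL q m := by
  rintro ⟨P, L⟩ ⟨h1, h2, h3⟩
  simp only [FlagThreefold, Set.mem_setOf_eq] at h1
  obtain ⟨a, ha⟩ := conjP_rep L
  obtain ⟨b, hb⟩ := conjP_rep P
  have h1' := congrArg (starRingEnd ℂ) h1
  have h2' := congrArg (starRingEnd ℂ) h2
  have h3' := congrArg (starRingEnd ℂ) h3
  rw [dotc3] at h1 h2 h3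
  simp only [dotc3, map_add, map_mul, map_zero] at h1' h2' h3'
  refine ⟨?_, ?_, ?_⟩
  · show dotc (conjP L).rep (conjP P).rep = 0
    rw [ha, hb, dotc3]
    linear_combination (a : ℂ) * (b : ℂ) * h1'
  · show dotc (conjP L).rep m = 0
    rw [ha, dotc3]
    have key : m 0 * starRingEnd ℂ (L.rep 0) + m 1 * starRingEnd ℂ (L.rep 1)
        + m 2 * starRingEnd ℂ (L.rep 2) = 0 := by
      apply mul_left_cancel₀ hc
      rw [mul_zero]
      linear_combination h3' - starRingEnd ℂ (L.rep 0) * hmc 0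
        - starRingEnd ℂ (L.rep 1) * hmc 1 - starRingEnd ℂ (L.rep 2) * hmc 2
    linear_combination (a : ℂ) * key
  · show dotc q (conjP P).rep = 0
    rw [hb, dotc3]
    have key : starRingEnd ℂ (q 0) * P.rep 0 + starRingEnd ℂ (q 1) * P.rep 1
        + starRingEnd ℂ (q 2) * P.rep 2 = 0 := by
      linear_combination c * h2 + P.rep 0 * hmc 0 + P.rep 1 * hmc 1 + P.rep 2 * hmc 2
    have key' := congrArg (starRingEnd ℂ) key
    simp only [map_add, map_mul, map_zero, Complex.conj_conj] at key'
    linear_combination (b : ℂ) * key'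

/-- A smooth conic `L_{q,m}` (i.e. `qm ≠ 0`) is `j`-invariant iff `m = q̄` in `ℙ²`.
In particular, the `j`-invariant smooth conics are exactly the fibers of the twistor
projection, i.e. the curves `L_{u,ū}`. -/
theorem conicL_j_invariant_iff (q m : Fin 3 → ℂ) (hq : q ≠ 0) (hm : m ≠ 0)
    (hqm : dotc q m ≠ 0) :
    ((jmap '' conicL q m = conicL q m) ↔
      Projectivization.mk ℂ m hm = conjP (Projectivization.mk ℂ q hq)) ∧
    ((jmap '' conicL q m = conicL q m) ↔
      ∃ (u : Fin 3 → ℂ) (_ : u ≠ 0),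
        conicL q m = conicL u (fun i => starRingEnd ℂ (u i))) := by
  have hcq : (fun i => starRingEnd ℂ (q i)) ≠ 0 := conj_ne_zero hq
  have iff1 : (jmap '' conicL q m = conicL q m) ↔
      Projectivization.mk ℂ m hm = conjP (Projectivization.mk ℂ q hq) := by
    constructor
    · intro h
      -- every point of the conic satisfies `p · q̄ = 0`
      have H : ∀ x ∈ conicL q m, dotc x.1.rep (fun i => starRingEnd ℂ (q i)) = 0 := by
        intro x hx
        rw [← h] at hx
        obtain ⟨y, hy, rfl⟩ := hx
        obtain ⟨a, ha⟩ := conjP_rep y.2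
        have h3 : dotc q y.2.rep = 0 := hy.2.2
        have h3' := congrArg (starRingEnd ℂ) h3
        rw [dotc3] at h3'
        simp only [map_add, map_mul, map_zero] at h3'
        show dotc (conjP y.2).rep _ = 0
        rw [ha, dotc3]
        linear_combination (a : ℂ) * h3'
      have key : ∀ v : Fin 3 → ℂ,
          dotc v (cross3 m (fun i => starRingEnd ℂ (q i))) = 0 := by
        intro v
        rw [← triple_prod]
        by_cases hp : cross3 v m = 0
        · rw [hp]; simp [dotc]
        · set p := cross3 v m with hpdef
          have hpm : dotc p m = 0 := dotc_cross_right' v m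
          have hl : cross3 p q ≠ 0 := by
            intro h0
            obtain ⟨t, ht⟩ := cross3_eq_zero hp h0
            apply hqm
            rw [ht, dotc3]
            simp only [Pi.smul_apply, smul_eq_mul]
            rw [dotc3] at hpm
            linear_combination t * hpm
          obtain ⟨a, ha⟩ := Projectivization.exists_smul_eq_mk_rep ℂ p hp
          obtain ⟨b, hb⟩ := Projectivization.exists_smul_eq_mk_rep ℂ (cross3 p q) hl
          have hx : (Projectivization.mk ℂ p hp, Projectivization.mk ℂ (cross3 p q) hl)
              ∈ conicL q m := by
            have e1 : dotc p (cross3 p q) = 0 := dotc_cross_left p q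
            have e3 : dotc q (cross3 p q) = 0 := dotc_cross_right p q
            rw [dotc3] at e1 e3 hpm
            refine ⟨?_, ?_, ?_⟩
            · show dotc (Projectivization.mk ℂ p hp).rep
                (Projectivization.mk ℂ (cross3 p q) hl).rep = 0
              rw [← ha, ← hb, dotc3]
              simp only [Units.smul_def, Pi.smul_apply, smul_eq_mul]
              linear_combination (a : ℂ) * (b : ℂ) * e1
            · show dotc (Projectivization.mk ℂ p hp).rep m = 0
              rw [← ha, dotc3]
              simp only [Units.smul_def, Pi.smul_apply, smul_eq_mul]
              linear_combination (a : ℂ) * hpm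
            · show dotc q (Projectivization.mk ℂ (cross3 p q) hl).rep = 0
              rw [← hb, dotc3]
              simp only [Units.smul_def, Pi.smul_apply, smul_eq_mul]
              linear_combination (b : ℂ) * e3
          have hH := H _ hx
          simp only at hH
          rw [← ha, dotc3] at hH
          simp only [Units.smul_def, Pi.smul_apply, smul_eq_mul] at hH
          rw [dotc3]
          refine mul_left_cancel₀ a.ne_zero ?_
          rw [mul_zero]
          linear_combination hH
      have hcr : cross3 m (fun i => starRingEnd ℂ (q i)) = 0 := by
        have k0 := key ![1, 0, 0]
        have k1 := key ![0, 1, 0]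
        have k2 := key ![0, 0, 1]
        rw [dotc3] at k0 k1 k2
        simp at k0 k1 k2
        funext i
        rcases (by omega : i = 0 ∨ i = 1 ∨ i = 2) with rfl | rfl | rfl <;>
          simp only [Pi.zero_apply]
        · exact k0
        · exact k1
        · exact k2
      obtain ⟨t, ht⟩ := cross3_eq_zero hm hcr
      have htne : t ≠ 0 := by
        intro h0
        apply hcq
        rw [ht, h0, zero_smul]
      rw [conjP_mk, Projectivization.mk_eq_mk_iff']
      refine ⟨t⁻¹, ?_⟩
      rw [ht, smul_smul, inv_mul_cancel₀ htne, one_smul]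
    · intro hEq
      rw [conjP_mk, Projectivization.mk_eq_mk_iff] at hEq
      obtain ⟨a, ha⟩ := hEq
      apply jimage
      refine mem_jmap q m ((a : ℂ)⁻¹) (inv_ne_zero a.ne_zero) fun i => ?_
      have := congrFun ha i
      simp only [Units.smul_def, Pi.smul_apply, smul_eq_mul] at this
      field_simp
      linear_combination this
  refine ⟨iff1, ?_⟩
  constructor
  · intro h
    have hEq := iff1.mp h
    rw [conjP_mk, Projectivization.mk_eq_mk_iff] at hEq
    obtain ⟨a, ha⟩ := hEq
    refine ⟨q, hq, ?_⟩
    ext x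
    have hda : ∀ w : Fin 3 → ℂ,
        dotc w m = (a : ℂ) * dotc w (fun i => starRingEnd ℂ (q i)) := by
      intro w
      rw [← ha, dotc3, dotc3]
      simp only [Units.smul_def, Pi.smul_apply, smul_eq_mul]
      ring
    constructor
    · rintro ⟨h1, h2, h3⟩
      refine ⟨h1, ?_, h3⟩
      have := h2
      rw [hda] at this
      rcases mul_eq_zero.mp this with h' | h'
      · exact absurd h' a.ne_zero
      · exact h'
    · rintro ⟨h1, h2, h3⟩
      exact ⟨h1, by rw [hda, h2, mul_zero], h3⟩
  · rintro ⟨u, hu, hS⟩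
    rw [hS]
    apply jimage
    exact mem_jmap u (fun i => starRingEnd ℂ (u i)) 1 one_ne_zero
      (fun i => (one_mul _).symm)
end
end

section
/- Let B₁,…,B₅ be five distinct lines in ℙ² such that B₁∩B₂ ∈ B₃, no point lies on four of the lines, and among any four of the five lines some three are concurrent. Then a contradiction follows; i.e., there is no such configuration. -/
/-!
Two distinct lines meet in a single point, so a point on `B i` and `B j` lies on exactly the
same lines as `B i ⨯₃ B j`; as no point lies on four lines, a point on three lines lies on no
others. For `m ∈ {0, 1, 2}`, the concurrent triple avoiding `B m` contains either two of
`B 0, B 1, B 2`, and then its point is the common point of `B 0, B 1, B 2`, which lies on `B m`;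
or both `B 3` and `B 4`, and then its point is `Q = B 3 ⨯₃ B 4`. So the lines through `Q` form a
triple avoiding `B 0`, `B 1` and `B 2`, although only `B 3` and `B 4` remain.
-/

/-- Three lines in `ℙ²` (given by nonzero linear forms) are concurrent if they have a
common point. -/
def Concurrent {K : Type*} [Field K] (B : Fin 5 → Fin 3 → K) (i j k : Fin 5) : Prop :=
  ∃ v : Fin 3 → K, v ≠ 0 ∧ (∑ t, B i t * v t = 0) ∧ (∑ t, B j t * v t = 0) ∧
    (∑ t, B k t * v t = 0)

open Finset Matrix

theorem Finset.exists_four_mem_of_three_lt_card {α : Type*} {s : Finset α} (h : 3 < #s) :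
    ∃ a b c d, a ∈ s ∧ b ∈ s ∧ c ∈ s ∧ d ∈ s ∧
      a ≠ b ∧ a ≠ c ∧ a ≠ d ∧ b ≠ c ∧ b ≠ d ∧ c ≠ d := by
  classical
  obtain ⟨a, ha⟩ := card_pos.1 (by omega : 0 < #s)
  have : 2 < #(s.erase a) := by rw [card_erase_of_mem ha]; omega
  obtain ⟨b, c, d, hb, hc, hd, hbc, hbd, hcd⟩ := two_lt_card_iff.1 this
  rw [mem_erase] at hb hc hd
  exact ⟨a, b, c, d, ha, hb.2, hc.2, hd.2, hb.1.symm, hc.1.symm, hd.1.symm, hbc, hbd, hcd⟩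

section Lines

variable {K : Type*} [Field K]

theorem linearIndependent_pair_of_forall_ne_smul {a b : Fin 3 → K}
    (hab : ∀ c : K, b ≠ c • a) (hba : ∀ c : K, a ≠ c • b) : LinearIndependent K ![a, b] :=
  (LinearIndependent.pair_iff' (by simpa using hba 0)).2 fun c h => hab c h.symm

theorem exists_smul_cross_eq_of_dotProduct_eq_zero {a b v : Fin 3 → K}
    (hab : LinearIndependent K ![a, b]) (ha : a ⬝ᵥ v = 0) (hb : b ⬝ᵥ v = 0) :
    ∃ c : K, c • a ⨯₃ b = v := by
  have hn : a ⨯₃ b ≠ 0 := crossProduct_ne_zero_iff_linearIndependent.2 hab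
  have hcross : a ⨯₃ b ⨯₃ v = 0 := by
    rw [cross_cross_eq_smul_sub_smul, ha, hb, zero_smul, zero_smul, sub_zero]
  by_contra! hne
  exact crossProduct_ne_zero_iff_linearIndependent.2
    ((LinearIndependent.pair_iff' hn).2 hne) hcross

theorem dotProduct_eq_zero_iff_dotProduct_cross_eq_zero {a b v : Fin 3 → K}
    (hab : LinearIndependent K ![a, b]) (hv : v ≠ 0) (ha : a ⬝ᵥ v = 0) (hb : b ⬝ᵥ v = 0)
    (c : Fin 3 → K) : c ⬝ᵥ v = 0 ↔ c ⬝ᵥ a ⨯₃ b = 0 := by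
  obtain ⟨t, rfl⟩ := exists_smul_cross_eq_of_dotProduct_eq_zero hab ha hb
  have ht : t ≠ 0 := by rintro rfl; simp at hv
  rw [dotProduct_smul, smul_eq_mul, mul_eq_zero, or_iff_right ht]

variable {ι : Type*} [Fintype ι] (B : ι → Fin 3 → K)

open Classical in
noncomputable def linesThrough (v : Fin 3 → K) : Finset ι := {i | B i ⬝ᵥ v = 0}

variable {B}

@[simp]
theorem mem_linesThrough {v : Fin 3 → K} {i : ι} : i ∈ linesThrough B v ↔ B i ⬝ᵥ v = 0 := by
  simp [linesThrough]

theorem linesThrough_eq_linesThrough_cross {i j : ι} {v : Fin 3 → K}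
    (hij : LinearIndependent K ![B i, B j]) (hv : v ≠ 0)
    (hi : i ∈ linesThrough B v) (hj : j ∈ linesThrough B v) :
    linesThrough B v = linesThrough B (B i ⨯₃ B j) := by
  ext k
  simp only [mem_linesThrough]
  exact dotProduct_eq_zero_iff_dotProduct_cross_eq_zero hij hv
    (mem_linesThrough.1 hi) (mem_linesThrough.1 hj) (B k)

end Lines

theorem three_four_subset_or_two_mem_of_card_eq_three :
    ∀ T : Finset (Fin 5), #T = 3 → {3, 4} ⊆ T ∨
      ∃ a ∈ T, ∃ b ∈ T, a ≠ b ∧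
        a ∈ ({0, 1, 2} : Finset (Fin 5)) ∧ b ∈ ({0, 1, 2} : Finset (Fin 5)) := by
  decide

section FiveLines

variable {K : Type*} [Field K] {B : Fin 5 → Fin 3 → K}

theorem Concurrent.exists_subset_linesThrough {i j k : Fin 5} (h : Concurrent B i j k) :
    ∃ v ≠ 0, {i, j, k} ⊆ linesThrough B v := by
  obtain ⟨v, hv, hi, hj, hk⟩ := h
  refine ⟨v, hv, ?_⟩
  simp only [insert_subset_iff, singleton_subset_iff, mem_linesThrough]
  exact ⟨hi, hj, hk⟩

theorem linesThrough_cross_three_four_eq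
    (hind : Pairwise fun i j => LinearIndependent K ![B i, B j])
    (hcard : ∀ v, v ≠ 0 → #(linesThrough B v) ≤ 3)
    {P : Fin 3 → K} (hP : P ≠ 0) (hP012 : {0, 1, 2} ⊆ linesThrough B P)
    {v : Fin 3 → K} (hv : v ≠ 0) {T : Finset (Fin 5)} (hT : T ⊆ linesThrough B v)
    (hT3 : #T = 3) {m : Fin 5} (hm : m ∈ ({0, 1, 2} : Finset (Fin 5))) (hmT : m ∉ T) :
    linesThrough B (B 3 ⨯₃ B 4) = T := by
  have hvT : linesThrough B v = T := (eq_of_subset_of_card_le hT (hT3 ▸ hcard v hv)).symm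
  rcases three_four_subset_or_two_mem_of_card_eq_three T hT3 with
    h34 | ⟨a, ha, b, hb, hab, ha012, hb012⟩
  · rw [← hvT, linesThrough_eq_linesThrough_cross (hind (by decide : (3 : Fin 5) ≠ 4)) hv
      (hT (h34 (by simp))) (hT (h34 (by simp)))]
  · have hvP : linesThrough B v = linesThrough B P := by
      rw [linesThrough_eq_linesThrough_cross (hind hab) hv (hT ha) (hT hb),
        linesThrough_eq_linesThrough_cross (hind hab) hP (hP012 ha012) (hP012 hb012)]
    exact absurd (hvT ▸ hvP ▸ hP012 hm) hmT

end FiveLines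

theorem no_five_lines_configuration_general {K : Type*} [Field K]
    (B : Fin 5 → Fin 3 → K)
    (hdist : ∀ i j, i ≠ j → ∀ c : K, B j ≠ c • B i)
    (h123 : Concurrent B 0 1 2)
    (no4 : ∀ v : Fin 3 → K, v ≠ 0 → ∀ i j k l : Fin 5,
      i ≠ j → i ≠ k → i ≠ l → j ≠ k → j ≠ l → k ≠ l →
      ¬ ((∑ t, B i t * v t = 0) ∧ (∑ t, B j t * v t = 0) ∧
          (∑ t, B k t * v t = 0) ∧ (∑ t, B l t * v t = 0)))
    (h4of5 : ∀ m : Fin 5, ∃ i j k : Fin 5,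
      i ≠ m ∧ j ≠ m ∧ k ≠ m ∧ i ≠ j ∧ i ≠ k ∧ j ≠ k ∧ Concurrent B i j k) :
    False := by
  have hind : Pairwise fun i j => LinearIndependent K ![B i, B j] := fun i j hij =>
    linearIndependent_pair_of_forall_ne_smul (hdist i j hij) (hdist j i hij.symm)
  have hcard : ∀ v, v ≠ 0 → #(linesThrough B v) ≤ 3 := by
    intro v hv
    by_contra! h
    obtain ⟨i, j, k, l, hi, hj, hk, hl, hij, hik, hil, hjk, hjl, hkl⟩ :=
      exists_four_mem_of_three_lt_card h
    simp only [mem_linesThrough] at hi hj hk hl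
    exact no4 v hv i j k l hij hik hil hjk hjl hkl ⟨hi, hj, hk, hl⟩
  obtain ⟨P, hP, hP012⟩ := h123.exists_subset_linesThrough
  have hQ : ∀ m ∈ ({0, 1, 2} : Finset (Fin 5)),
      m ∉ linesThrough B (B 3 ⨯₃ B 4) ∧ #(linesThrough B (B 3 ⨯₃ B 4)) = 3 := by
    intro m hm
    obtain ⟨i, j, k, him, hjm, hkm, hij, hik, hjk, hijk⟩ := h4of5 m
    obtain ⟨v, hv, hvT⟩ := hijk.exists_subset_linesThrough
    have hT3 : #({i, j, k} : Finset (Fin 5)) = 3 := card_eq_three.2 ⟨i, j, k, hij, hik, hjk, rfl⟩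
    have hmT : m ∉ ({i, j, k} : Finset (Fin 5)) := by simp [him.symm, hjm.symm, hkm.symm]
    rw [linesThrough_cross_three_four_eq hind hcard hP hP012 hv hvT hT3 hm hmT]
    exact ⟨hmT, hT3⟩
  have hsub : linesThrough B (B 3 ⨯₃ B 4) ⊆ {3, 4} := by
    intro i hi
    fin_cases i <;> simp_all
  exact absurd (card_le_card hsub) (by rw [(hQ 0 (by simp)).2]; decide)

/-- There is no configuration of five distinct lines `B₁,…,B₅` in `ℙ²` such that the
point `B₁ ∩ B₂` lies on `B₃`, no point lies on four of the lines, and among any four of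
the five lines some three are concurrent. -/
theorem no_five_lines_configuration {K : Type*} [Field K]
    (B : Fin 5 → Fin 3 → K) (hB : ∀ i, B i ≠ 0)
    (hdist : ∀ i j, i ≠ j → ∀ c : K, B j ≠ c • B i)
    (h123 : Concurrent B 0 1 2)
    (no4 : ∀ v : Fin 3 → K, v ≠ 0 → ∀ i j k l : Fin 5,
      i ≠ j → i ≠ k → i ≠ l → j ≠ k → j ≠ l → k ≠ l →
      ¬ ((∑ t, B i t * v t = 0) ∧ (∑ t, B j t * v t = 0) ∧
          (∑ t, B k t * v t = 0) ∧ (∑ t, B l t * v t = 0)))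
    (h4of5 : ∀ m : Fin 5, ∃ i j k : Fin 5,
      i ≠ m ∧ j ≠ m ∧ k ≠ m ∧ i ≠ j ∧ i ≠ k ∧ j ≠ k ∧ Concurrent B i j k) :
    False :=
  no_five_lines_configuration_general B hdist h123 no4 h4of5
end
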